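/- Let X be an uncountable compact metric space, n ≥ 1, and t ≥ 0 a real number with t < n. Suppose the set D of functions g in C(X, ℝⁿ) with upper box dimension of g(X) at most t is dense. Then the set of functions f in C(X, ℝⁿ) whose image f(X) has lower box dimension at most t is residual (comeagre) in C(X, ℝⁿ). -/

import Mathlib

open Set Metric Filter MeasureTheory TopologicalSpace

noncomputable def coveringNumber {X : Type*} [MetricSpace X] (δ : ℝ) (F : Set X) : ℕ∞ :=
  sInf {m : ℕ∞ | ∃ C : Finset (Set X), (C.card : ℕ∞) = m ∧
    (∀ U ∈ C, IsOpen U ∧ Metric.diam U ≤ δ) ∧ F ⊆ ⋃ U ∈ C, U}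

noncomputable def packingNumber {X : Type*} [MetricSpace X] (δ : ℝ) (F : Set X) : ℕ∞ :=
  sSup {m : ℕ∞ | ∃ S : Finset X, (S.card : ℕ∞) = m ∧ (↑S : Set X) ⊆ F ∧
    (S : Set X).Pairwise fun x y => Disjoint (Metric.closedBall x δ) (Metric.closedBall y δ)}

noncomputable def upperBoxDim {X : Type*} [MetricSpace X] (F : Set X) : ℝ :=
  Filter.limsup (fun δ : ℝ => Real.log ((coveringNumber δ F).toNat) / (-Real.log δ))
    (nhdsWithin 0 (Set.Ioi 0))

noncomputable def lowerBoxDim {X : Type*} [MetricSpace X] (F : Set X) : ℝ :=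
  Filter.liminf (fun δ : ℝ => Real.log ((coveringNumber δ F).toNat) / (-Real.log δ))
    (nhdsWithin 0 (Set.Ioi 0))

noncomputable def packingDim {X : Type*} [MetricSpace X] (F : Set X) : ℝ :=
  sInf {s : ℝ | ∃ E : ℕ → Set X, F ⊆ ⋃ i, E i ∧ ∀ i, upperBoxDim (E i) ≤ s}

noncomputable def covDim (Y : Type*) [TopologicalSpace Y] : ℕ∞ :=
  sInf {m : ℕ∞ | ∀ (ι : Type) (U : ι → Set Y), (∀ i, IsOpen (U i)) → (⋃ i, U i) = Set.univ →
    ∃ (κ : Type) (V : κ → Set Y), (∀ j, IsOpen (V j)) ∧ (⋃ j, V j) = Set.univ ∧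
      (∀ j, ∃ i, V j ⊆ U i) ∧ ∀ y : Y, ENat.card {j : κ // y ∈ V j} ≤ m + 1}

/-!
For fixed `δ`, the covering number of `f(X)` is upper semicontinuous in `f`: a finite open cover
of the compact set `f(X)` still covers `g(X)` for `g` uniformly close to `f`. Hence, for each `ε`,
the maps `f` such that `f(X)` is covered at some scale `δ < ε` by at most `δ ^ (-(t + ε))` sets
form an open set. It contains every `g` with `upperBoxDim g(X) ≤ t`, so it is dense. On the countable
intersection over `ε = 1 / (k + 1)` the lower box dimension is at most `t`.
-/

open Topology

section CoveringNumber

variable {Y : Type*} [MetricSpace Y] {δ : ℝ} {F : Set Y}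

lemma coveringNumber_le_card (C : Finset (Set Y)) (hC : ∀ U ∈ C, IsOpen U ∧ diam U ≤ δ)
    (hF : F ⊆ ⋃ U ∈ C, U) : coveringNumber δ F ≤ C.card :=
  sInf_le ⟨C, rfl, hC, hF⟩

lemma exists_cover_card_eq_coveringNumber (h : coveringNumber δ F ≠ ⊤) :
    ∃ C : Finset (Set Y), (C.card : ℕ∞) = coveringNumber δ F ∧
      (∀ U ∈ C, IsOpen U ∧ diam U ≤ δ) ∧ F ⊆ ⋃ U ∈ C, U := by
  have hne : {m : ℕ∞ | ∃ C : Finset (Set Y), (C.card : ℕ∞) = m ∧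
      (∀ U ∈ C, IsOpen U ∧ diam U ≤ δ) ∧ F ⊆ ⋃ U ∈ C, U}.Nonempty := by
    by_contra hempty
    exact h (by rw [_root_.coveringNumber, not_nonempty_iff_eq_empty.1 hempty, sInf_empty])
  exact csInf_mem hne

lemma upperSemicontinuous_coveringNumber_range {X : Type*} [TopologicalSpace X]
    [CompactSpace X] (δ : ℝ) :
    UpperSemicontinuous fun f : C(X, Y) => coveringNumber δ (range f) := by
  intro f m hm
  obtain ⟨C, hCcard, hC, hcover⟩ := exists_cover_card_eq_coveringNumber hm.ne_top
  obtain ⟨η, hη, hthick⟩ := (isCompact_range f.continuous).exists_thickening_subset_open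
    (isOpen_biUnion fun U hU => (hC U hU).1) hcover
  filter_upwards [ball_mem_nhds f hη] with g hg
  refine lt_of_le_of_lt (coveringNumber_le_card C hC ?_) (hCcard.trans_lt hm)
  rintro _ ⟨x, rfl⟩
  exact hthick (mem_thickening_iff.2 ⟨f x, mem_range_self x,
    (ContinuousMap.dist_apply_le_dist x).trans_lt (mem_ball.1 hg)⟩)

end CoveringNumber

section BoxCounting

variable {Y : Type*} [MetricSpace Y] {δ ε ε' t : ℝ} {F : Set Y}

noncomputable def boxCountingRatio (F : Set Y) (δ : ℝ) : ℝ :=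
  Real.log (coveringNumber δ F).toNat / -Real.log δ

lemma boxCountingRatio_nonneg (hδ0 : 0 < δ) (hδ1 : δ < 1) : 0 ≤ boxCountingRatio F δ :=
  div_nonneg (Real.log_natCast_nonneg _) (neg_nonneg.2 (Real.log_nonpos hδ0.le hδ1.le))

lemma boxCountingRatio_le_of_coveringNumber_le {m : ℕ} (hδ0 : 0 < δ) (hδ1 : δ < 1)
    (h : coveringNumber δ F ≤ m) : boxCountingRatio F δ ≤ Real.log m / -Real.log δ := by
  have hle : (coveringNumber δ F).toNat ≤ m := ENat.toNat_le_of_le_natCast h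
  have hlog : Real.log (coveringNumber δ F).toNat ≤ Real.log m := by
    rcases Nat.eq_zero_or_pos (coveringNumber δ F).toNat with hzero | hpos
    · simpa [hzero] using Real.log_natCast_nonneg m
    · exact Real.log_le_log (by exact_mod_cast hpos) (by exact_mod_cast hle)
  exact div_le_div_of_nonneg_right hlog (neg_nonneg.2 (Real.log_nonpos hδ0.le hδ1.le))

/-- `F` can be covered at some scale `δ < ε` by at most `m ≤ δ ^ (-(t + ε))` sets. -/
def HasBoxCountingScale (t ε : ℝ) (F : Set Y) : Prop :=
  ∃ δ ∈ Ioo 0 ε, ∃ m : ℕ, coveringNumber δ F ≤ m ∧ Real.log m / -Real.log δ < t + ε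

lemma HasBoxCountingScale.mono (h : HasBoxCountingScale t ε F) (hε : ε ≤ ε') :
    HasBoxCountingScale t ε' F :=
  let ⟨δ, hδ, m, hcov, hlog⟩ := h
  ⟨δ, ⟨hδ.1, hδ.2.trans_le hε⟩, m, hcov, hlog.trans_le (by linarith)⟩

lemma lowerBoxDim_le_of_forall_hasBoxCountingScale (h : ∀ ε > 0, HasBoxCountingScale t ε F) :
    lowerBoxDim F ≤ t := by
  change liminf (boxCountingRatio F) (𝓝[>] 0) ≤ t
  have hbdd : IsBoundedUnder (· ≥ ·) (𝓝[>] 0) (boxCountingRatio F) :=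
    ⟨0, eventually_map.2 <| eventually_of_mem (Ioo_mem_nhdsGT one_pos)
      fun δ hδ => boxCountingRatio_nonneg hδ.1 hδ.2⟩
  refine le_of_forall_pos_le_add fun ε hε => liminf_le_of_frequently_le ?_ hbdd
  rw [frequently_iff]
  intro s hs
  obtain ⟨a, ha, hsub⟩ := mem_nhdsGT_iff_exists_Ioo_subset.1 hs
  have hpos : 0 < min (min a 1) ε := lt_min (lt_min ha one_pos) hε
  obtain ⟨δ, ⟨hδ0, hδ⟩, m, hcov, hlog⟩ := h _ hpos
  refine ⟨δ, hsub ⟨hδ0, hδ.trans_le ((min_le_left _ _).trans (min_le_left _ _))⟩, ?_⟩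
  calc boxCountingRatio F δ ≤ Real.log m / -Real.log δ :=
        boxCountingRatio_le_of_coveringNumber_le hδ0
          (hδ.trans_le ((min_le_left _ _).trans (min_le_right _ _))) hcov
    _ ≤ t + ε := hlog.le.trans (by linarith [min_le_right (min a 1) ε])

lemma isOpen_setOf_hasBoxCountingScale_range {X : Type*} [TopologicalSpace X] [CompactSpace X]
    (t ε : ℝ) : IsOpen {f : C(X, Y) | HasBoxCountingScale t ε (range f)} := by
  refine isOpen_iff_mem_nhds.2 fun f ⟨δ, hδ, m, hcov, hlog⟩ => ?_
  filter_upwards [upperSemicontinuous_coveringNumber_range δ f (m + 1)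
    ((ENat.lt_add_one_iff (ENat.natCast_ne_top m)).2 hcov)] with g hg
  exact ⟨δ, hδ, m, (ENat.lt_add_one_iff (ENat.natCast_ne_top m)).1 hg, hlog⟩

end BoxCounting

section Euclidean

variable {n : ℕ} {K : Set (Fin n → ℝ)}

lemma card_Icc_floor_neg_floor_le {a : ℝ} (ha : 0 ≤ a) :
    ((Finset.Icc ⌊-a⌋ ⌊a⌋).card : ℝ) ≤ 2 * a + 2 := by
  have hmono : ⌊-a⌋ ≤ ⌊a⌋ := Int.floor_mono (neg_le_self ha)
  rw [Int.card_Icc, ← Int.cast_natCast, Int.toNat_of_nonneg (by omega)]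
  push_cast
  linarith [Int.floor_le a, Int.sub_one_lt_floor (-a)]

lemma coveringNumber_le_of_subset_closedBall {R δ : ℝ} (hR : 0 ≤ R) (hδ : 0 < δ)
    (hK : K ⊆ closedBall 0 R) :
    ∃ N : ℕ, coveringNumber δ K ≤ N ∧ (N : ℝ) ≤ (4 * R / δ + 2) ^ n := by
  classical
  set ε := δ / 2 with hε_def
  have hε : 0 < ε := by positivity
  set I := Finset.Icc ⌊-(R / ε)⌋ ⌊R / ε⌋
  set C := (Fintype.piFinset fun _ : Fin n => I).image
    fun v => ball (fun i => (v i : ℝ) * ε) ε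
  refine ⟨C.card, coveringNumber_le_card C ?_ ?_, ?_⟩
  · simp only [C, Finset.mem_image]
    rintro _ ⟨v, -, rfl⟩
    exact ⟨isOpen_ball, (diam_ball hε.le).trans_eq (by ring)⟩
  · intro x hx
    have hxi : ∀ i, |x i| ≤ R := fun i =>
      (norm_le_pi_norm x i).trans (mem_closedBall_zero_iff.1 (hK hx))
    refine mem_biUnion (x := ball (fun i => (⌊x i / ε⌋ : ℝ) * ε) ε)
      (Finset.mem_image_of_mem _ (Fintype.mem_piFinset.2 fun i => ?_)) ?_
    · have := abs_le.1 (hxi i)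
      exact Finset.mem_Icc.2 ⟨Int.floor_mono (by rw [← neg_div]; gcongr; linarith),
        Int.floor_mono (by gcongr; linarith)⟩
    · rw [ball_pi _ hε]
      intro i _
      have hlo := Int.floor_le (x i / ε)
      have hhi := Int.lt_floor_add_one (x i / ε)
      rw [le_div_iff₀ hε] at hlo
      rw [div_lt_iff₀ hε] at hhi
      rw [mem_ball, Real.dist_eq, abs_sub_lt_iff]
      constructor <;> linarith
  · calc (C.card : ℝ) ≤ (Fintype.piFinset fun _ : Fin n => I).card := by
          exact_mod_cast Finset.card_image_le
      _ = (I.card : ℝ) ^ n := by simp [Fintype.card_piFinset]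
      _ ≤ (2 * (R / ε) + 2) ^ n := by gcongr; exact card_Icc_floor_neg_floor_le (by positivity)
      _ = (4 * R / δ + 2) ^ n := by rw [hε_def]; ring

/- Needed because the `limsup` in `upperBoxDim` is a junk value for an unbounded ratio. -/
lemma isBoundedUnder_le_boxCountingRatio (hK : Bornology.IsBounded K) :
    IsBoundedUnder (· ≤ ·) (𝓝[>] 0) (boxCountingRatio K) := by
  obtain ⟨R, hR, hKR⟩ := hK.subset_closedBall_lt 0 0
  set c := 4 * R + 2
  have hlogc : 0 ≤ Real.log c := Real.log_nonneg (by linarith)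
  refine ⟨n * (Real.log c + 1), eventually_map.2 ?_⟩
  filter_upwards [Ioo_mem_nhdsGT (Real.exp_pos (-1))] with δ ⟨hδ0, hδe⟩
  have hδ1 : δ < 1 := hδe.trans (Real.exp_lt_one_iff.2 (by norm_num))
  have hL : 1 ≤ -Real.log δ := by
    have := Real.log_lt_log hδ0 hδe
    rw [Real.log_exp] at this
    linarith
  obtain ⟨N, hcov, hN⟩ := coveringNumber_le_of_subset_closedBall hR.le hδ0 hKR
  have hbase : 4 * R / δ + 2 ≤ c / δ := by
    have : 2 ≤ 2 / δ := by rw [le_div_iff₀ hδ0]; linarith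
    rw [add_div]
    linarith
  have hlogN : Real.log N ≤ n * (Real.log c + -Real.log δ) := by
    rcases Nat.eq_zero_or_pos N with hzero | hpos
    · simp only [hzero, Nat.cast_zero, Real.log_zero]
      positivity
    · calc Real.log N ≤ Real.log ((c / δ) ^ n) :=
            Real.log_le_log (by exact_mod_cast hpos) (hN.trans (by gcongr))
        _ = n * (Real.log c + -Real.log δ) := by
            rw [Real.log_pow, Real.log_div (by positivity) hδ0.ne']; ring
  calc boxCountingRatio K δ ≤ Real.log N / -Real.log δ :=
        boxCountingRatio_le_of_coveringNumber_le hδ0 hδ1 hcov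
    _ ≤ n * (Real.log c + -Real.log δ) / -Real.log δ := by gcongr
    _ = n * Real.log c / -Real.log δ + n := by
        rw [mul_add, add_div, mul_div_cancel_right₀ _ (by linarith)]
    _ ≤ n * Real.log c + n := by gcongr; exact div_le_self (by positivity) hL
    _ = n * (Real.log c + 1) := by ring

lemma hasBoxCountingScale_of_upperBoxDim_le (hK : Bornology.IsBounded K) (h : upperBoxDim K ≤ t)
    (hε : 0 < ε) : HasBoxCountingScale t ε K := by
  have hlt : limsup (boxCountingRatio K) (𝓝[>] 0) < t + ε := by
    change upperBoxDim K < t + ε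
    linarith
  obtain ⟨δ, hratio, hδ⟩ := ((eventually_lt_of_limsup_lt hlt
    (isBoundedUnder_le_boxCountingRatio hK)).and (Ioo_mem_nhdsGT hε)).exists
  obtain ⟨R, hR, hKR⟩ := hK.subset_closedBall_lt 0 0
  obtain ⟨N, hN, -⟩ := coveringNumber_le_of_subset_closedBall hR.le hδ.1 hKR
  have hfin : coveringNumber δ K ≠ ⊤ := ne_top_of_le_ne_top (ENat.natCast_ne_top N) hN
  exact ⟨δ, hδ, (coveringNumber δ K).toNat, (ENat.natCast_toNat hfin).ge, hratio⟩

end Euclidean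

theorem stmt9_general {X : Type*} [MetricSpace X] [CompactSpace X]
    (n : ℕ) (t : ℝ)
    (hD : Dense {g : C(X, Fin n → ℝ) | upperBoxDim (Set.range g) ≤ t}) :
    {f : C(X, Fin n → ℝ) | lowerBoxDim (Set.range f) ≤ t} ∈ residual C(X, Fin n → ℝ) := by
  have hscale (k : ℕ) :
      {f : C(X, Fin n → ℝ) | HasBoxCountingScale t (1 / (k + 1)) (range f)} ∈ residual _ :=
    residual_of_dense_open (isOpen_setOf_hasBoxCountingScale_range t _) <| hD.mono fun g hg =>
      hasBoxCountingScale_of_upperBoxDim_le (isCompact_range g.continuous).isBounded hg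
        Nat.one_div_pos_of_nat
  filter_upwards [countable_iInter_mem.2 hscale] with f hf
  refine lowerBoxDim_le_of_forall_hasBoxCountingScale fun ε hε => ?_
  obtain ⟨k, hk⟩ := exists_nat_one_div_lt hε
  exact (mem_iInter.1 hf k).mono hk.le

theorem stmt9 {X : Type*} [MetricSpace X] [CompactSpace X]
    (hX : ¬(Set.univ : Set X).Countable) (n : ℕ) (hn : 1 ≤ n)
    (t : ℝ) (ht0 : 0 ≤ t) (htn : t < n)
    (hD : Dense {g : C(X, Fin n → ℝ) | upperBoxDim (Set.range g) ≤ t}) :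
    {f : C(X, Fin n → ℝ) | lowerBoxDim (Set.range f) ≤ t} ∈ residual C(X, Fin n → ℝ) :=
  stmt9_general n t hD
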